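/- For every finite word w over {0,1,2}, the weights satisfy the strict inequality (b_0^(w) - 1/3)^2 + (b_1^(w) - 1/3)^2 + (b_2^(w) - 1/3)^2 < 1/6. -/

import Mathlib

open Matrix BigOperators

/-- The matrix `M_0`. -/
noncomputable def M0 : Matrix (Fin 3) (Fin 3) ℝ :=
  (1 / 15 : ℝ) • !![9, 0, 0; 2, 2, -1; 2, -1, 2]

/-- The matrix `M_1`. -/
noncomputable def M1 : Matrix (Fin 3) (Fin 3) ℝ :=
  (1 / 15 : ℝ) • !![2, 2, -1; 0, 9, 0; -1, 2, 2]

/-- The matrix `M_2`. -/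
noncomputable def M2 : Matrix (Fin 3) (Fin 3) ℝ :=
  (1 / 15 : ℝ) • !![2, -1, 2; -1, 2, 2; 0, 0, 9]

/-- `Mmat i` is the matrix `M_i`. -/
noncomputable def Mmat : Fin 3 → Matrix (Fin 3) (Fin 3) ℝ := ![M0, M1, M2]

/-- For a word `w = [w₁, ..., wₘ]`, `Mword w = M_{w₁} * ⋯ * M_{wₘ}`
(the empty word giving the identity matrix). -/
noncomputable def Mword (w : List (Fin 3)) : Matrix (Fin 3) (Fin 3) ℝ :=
  (w.map Mmat).prod

/-- The `j`-th column `z_j` of `M_w`, as a vector in `ℝ³`. -/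
noncomputable def zcol (w : List (Fin 3)) (j : Fin 3) : Fin 3 → ℝ :=
  fun i => Mword w i j

/-- The vector `z = z₀ + z₁ + z₂`, the sum of the columns of `M_w`. -/
noncomputable def zvec (w : List (Fin 3)) : Fin 3 → ℝ :=
  fun i => ∑ j : Fin 3, Mword w i j

/-- `c_j^(w)`, the `j`-th column sum of `M_w`, i.e. the `j`-th entry of `(1,1,1) M_w`. -/
noncomputable def cw (w : List (Fin 3)) (j : Fin 3) : ℝ :=
  ∑ i : Fin 3, Mword w i j

/-- `S^(w) = c₀^(w) + c₁^(w) + c₂^(w)`, the sum of all entries of `M_w`. -/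
noncomputable def Sw (w : List (Fin 3)) : ℝ :=
  ∑ j : Fin 3, cw w j

/-- The weight `b_j^(w) = 1/6 + c_j^(w) / (2 S^(w))`. -/
noncomputable def bwt (w : List (Fin 3)) (j : Fin 3) : ℝ :=
  1 / 6 + cw w j / (2 * Sw w)

/-!
The weights lie in the disk exactly when `e₂(c) = c₀c₁ + c₁c₂ + c₂c₀` is positive: a direct
computation gives `∑ⱼ (bⱼ - 1/3)² = 1/6 - e₂(c) / (2 S²)`. Since `2 e₂(v) = (∑ v)² - ‖v‖²` is a
Lorentzian form, `{v | 0 < ∑ v, 0 < e₂ v}` is a round cone around `(1,1,1)`. Each `M_a` maps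
it into itself: `e₂(v M_a) = e₂(v) / 25` and `∑ (v M_a) = (∑ v + 2 v_a) / 5`, where the linear
form `∑ v + 2 v_a` is positive on the cone. Starting from `(1,1,1)`, the row vector `c = (1,1,1) M_w`
stays in the cone.
-/

def esymm2 (v : Fin 3 → ℝ) : ℝ :=
  v 0 * v 1 + v 1 * v 2 + v 2 * v 0

def forwardCone : Set (Fin 3 → ℝ) :=
  {v | 0 < ∑ i, v i ∧ 0 < esymm2 v}

lemma sum_vecMul_Mmat (a : Fin 3) (v : Fin 3 → ℝ) :
    ∑ j, (v ᵥ* Mmat a) j = (∑ i, v i + 2 * v a) / 5 := by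
  fin_cases a <;>
    simp [Mmat, M0, M1, M2, vecMul, dotProduct, Fin.sum_univ_three] <;> ring

lemma esymm2_vecMul_Mmat (a : Fin 3) (v : Fin 3 → ℝ) :
    esymm2 (v ᵥ* Mmat a) = esymm2 v / 25 := by
  fin_cases a <;>
    simp [esymm2, Mmat, M0, M1, M2, vecMul, dotProduct, Fin.sum_univ_three] <;> ring

lemma sum_add_two_mul_pos {v : Fin 3 → ℝ} (hv : v ∈ forwardCone) (a : Fin 3) :
    0 < ∑ i, v i + 2 * v a := by
  obtain ⟨hS, hq⟩ := hv
  simp only [Fin.sum_univ_three, esymm2] at hS hq ⊢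
  fin_cases a <;> simp only [Fin.zero_eta, Fin.mk_one, Fin.reduceFinMk] <;>
    nlinarith [sq_nonneg (v 0 - v 1), sq_nonneg (v 1 - v 2), sq_nonneg (v 2 - v 0)]

lemma vecMul_Mmat_mem_forwardCone {v : Fin 3 → ℝ} (hv : v ∈ forwardCone) (a : Fin 3) :
    v ᵥ* Mmat a ∈ forwardCone := by
  refine ⟨?_, ?_⟩
  · rw [sum_vecMul_Mmat]
    exact div_pos (sum_add_two_mul_pos hv a) (by norm_num)
  · rw [esymm2_vecMul_Mmat]
    exact div_pos hv.2 (by norm_num)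

lemma Mword_cons (a : Fin 3) (w : List (Fin 3)) : Mword (a :: w) = Mmat a * Mword w := by
  simp [Mword]

lemma vecMul_Mword_mem_forwardCone (w : List (Fin 3)) {v : Fin 3 → ℝ}
    (hv : v ∈ forwardCone) : v ᵥ* Mword w ∈ forwardCone := by
  induction w generalizing v with
  | nil => simpa [Mword] using hv
  | cons a w ih =>
    rw [Mword_cons, ← vecMul_vecMul]
    exact ih (vecMul_Mmat_mem_forwardCone hv a)

lemma cw_eq_one_vecMul (w : List (Fin 3)) : cw w = 1 ᵥ* Mword w := by
  ext j
  simp [cw, vecMul, dotProduct]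

lemma one_mem_forwardCone : (1 : Fin 3 → ℝ) ∈ forwardCone := by
  norm_num [forwardCone, esymm2]

lemma sum_sq_weight_sub_third (c : Fin 3 → ℝ) (hS : ∑ i, c i ≠ 0) :
    (1 / 6 + c 0 / (2 * ∑ i, c i) - 1 / 3) ^ 2 + (1 / 6 + c 1 / (2 * ∑ i, c i) - 1 / 3) ^ 2
      + (1 / 6 + c 2 / (2 * ∑ i, c i) - 1 / 3) ^ 2 = 1 / 6 - esymm2 c / (2 * (∑ i, c i) ^ 2) := by
  rw [Fin.sum_univ_three] at hS ⊢
  field_simp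
  simp only [esymm2]
  ring

/-- For every finite word `w` over `{0,1,2}`,
`(b₀^(w) - 1/3)² + (b₁^(w) - 1/3)² + (b₂^(w) - 1/3)² < 1/6`. -/
theorem stmt_15 (w : List (Fin 3)) :
    (bwt w 0 - 1 / 3) ^ 2 + (bwt w 1 - 1 / 3) ^ 2 + (bwt w 2 - 1 / 3) ^ 2
      < 1 / 6 := by
  obtain ⟨hS, hq⟩ : cw w ∈ forwardCone := by
    rw [cw_eq_one_vecMul]
    exact vecMul_Mword_mem_forwardCone w one_mem_forwardCone
  simp only [bwt, Sw]
  rw [sum_sq_weight_sub_third _ hS.ne']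
  have : 0 < esymm2 (cw w) / (2 * (∑ j, cw w j) ^ 2) := by positivity
  linarith
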